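/- arXiv:2406.06250 — 5 statements merged into one kernel-verified Lean document; each statement's English description precedes it below -/
import Mathlib

section
/- Let 𝕂 be a field and w, g, h ∈ GL(d, 𝕂). For any N ∈ ℕ, the Zariski closure of the set {w gⁿ hⁿ : n ≥ N} contains the product w g h. Concretely: if p is a polynomial in the matrix entries with p(w gⁿ hⁿ) = 0 for all n ≥ N, then p(w g h) = 0. -/
/-!
With `a = w gᴺ w⁻¹` and `b = hᴺ` we have `a (w gⁿ hⁿ) b = w g^(N+n) h^(N+n)`, so the set
`S = {w gⁿ hⁿ : n ≥ N}` is stable under `M ↦ a M b`. The substitution `p(X) ↦ p(a X b)` is an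
algebra automorphism of the polynomial ring that does not raise total degree, hence it maps the
finite-dimensional space of polynomials of degree `≤ deg p` vanishing on `S` injectively, and
therefore bijectively, to itself. So `p(X) = q(a X b)` with `q` vanishing on `S`, and
`p(w g h) = q(w g^(N+1) h^(N+1)) = 0`.
-/

open Matrix

theorem Submodule.map_equiv_eq_self_of_map_le {K V : Type*} [DivisionRing K] [AddCommGroup V]
    [Module K V] (e : V ≃ₗ[K] V) {W : Submodule K V} [FiniteDimensional K W]
    (h : W.map (e : V →ₗ[K] V) ≤ W) : W.map (e : V →ₗ[K] V) = W :=
  Submodule.eq_of_le_of_finrank_eq h (LinearEquiv.finrank_map_eq e W)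

namespace MvPolynomial

theorem totalDegree_aeval_le_of_isHomogeneous_one {σ τ R S : Type*} [CommSemiring R]
    [CommSemiring S] [Algebra R S] {g : σ → MvPolynomial τ S} (hg : ∀ i, (g i).IsHomogeneous 1)
    (p : MvPolynomial σ R) : (aeval g p).totalDegree ≤ p.totalDegree := by
  conv_lhs => rw [← sum_homogeneousComponent p]
  rw [map_sum]
  refine totalDegree_finsetSum_le fun m hm => ?_
  have hdeg := ((homogeneousComponent_isHomogeneous m p).aeval g hg).totalDegree_le
  rw [one_mul] at hdeg
  exact hdeg.trans (Nat.lt_succ_iff.mp (Finset.mem_range.mp hm))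

section MatrixTranslate

variable {n K : Type*} [Fintype n] [CommRing K]

noncomputable def matrixTranslate (A B : Matrix n n K) :
    MvPolynomial (n × n) K →ₐ[K] MvPolynomial (n × n) K :=
  aeval fun ij =>
    (A.map C * mvPolynomialX n n K * B.map C : Matrix n n (MvPolynomial (n × n) K)) ij.1 ij.2

theorem aeval_matrixTranslate {S : Type*} [CommRing S] [Algebra K S] (A B : Matrix n n K)
    (M : Matrix n n S) (p : MvPolynomial (n × n) K) :
    aeval (fun ij => M ij.1 ij.2) (matrixTranslate A B p) =
      aeval (fun ij => (A.map (algebraMap K S) * M * B.map (algebraMap K S)) ij.1 ij.2) p := by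
  let φ : MvPolynomial (n × n) K →+* S :=
    (aeval (R := K) fun ij : n × n => M ij.1 ij.2).toRingHom
  have hmap : (A.map C * mvPolynomialX n n K * B.map C).map φ =
      A.map (algebraMap K S) * M * B.map (algebraMap K S) := by
    rw [Matrix.map_mul, Matrix.map_mul]
    congr <;> ext <;> simp [φ]
  rw [matrixTranslate, comp_aeval_apply, ← hmap]
  rfl

theorem eval_matrixTranslate (A B M : Matrix n n K) (p : MvPolynomial (n × n) K) :
    eval (fun ij => M ij.1 ij.2) (matrixTranslate A B p) =
      eval (fun ij => (A * M * B) ij.1 ij.2) p := by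
  simpa [coe_aeval_eq_eval] using aeval_matrixTranslate A B M p

theorem matrixTranslate_matrixTranslate (A B A' B' : Matrix n n K) (p : MvPolynomial (n × n) K) :
    matrixTranslate A B (matrixTranslate A' B' p) = matrixTranslate (A' * A) (B * B') p := by
  conv_lhs => rw [matrixTranslate]
  rw [aeval_matrixTranslate, matrixTranslate, algebraMap_eq, Matrix.map_mul, Matrix.map_mul]
  simp only [Matrix.mul_assoc]

theorem isHomogeneous_matrixTranslate_X (A B : Matrix n n K) (ij : n × n) :
    (matrixTranslate A B (X ij)).IsHomogeneous 1 := by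
  simp only [matrixTranslate, aeval_X, Matrix.mul_apply, Matrix.map_apply, mvPolynomialX_apply]
  refine IsHomogeneous.sum _ _ _ fun l _ => ?_
  rw [mul_comm]
  refine IsHomogeneous.C_mul (IsHomogeneous.sum _ _ _ fun k _ => ?_) _
  exact (isHomogeneous_X _ _).C_mul _

theorem totalDegree_matrixTranslate_le (A B : Matrix n n K) (p : MvPolynomial (n × n) K) :
    (matrixTranslate A B p).totalDegree ≤ p.totalDegree := by
  rw [aeval_unique (matrixTranslate A B)]
  exact totalDegree_aeval_le_of_isHomogeneous_one (isHomogeneous_matrixTranslate_X A B) p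

variable [DecidableEq n]

theorem matrixTranslate_one_one (p : MvPolynomial (n × n) K) :
    matrixTranslate (1 : Matrix n n K) 1 p = p := by
  rw [matrixTranslate, Matrix.map_one _ C_0 C_1, Matrix.one_mul, Matrix.mul_one]
  exact aeval_X_left_apply p

noncomputable def matrixTranslateEquiv (a b : GL n K) :
    MvPolynomial (n × n) K ≃ₐ[K] MvPolynomial (n × n) K :=
  AlgEquiv.ofAlgHom (matrixTranslate a b) (matrixTranslate ↑a⁻¹ ↑b⁻¹)
    (AlgHom.ext fun p => by simp [matrixTranslate_matrixTranslate, matrixTranslate_one_one])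
    (AlgHom.ext fun p => by simp [matrixTranslate_matrixTranslate, matrixTranslate_one_one])

end MatrixTranslate

theorem eval_eq_zero_of_mul_mul_mem {n K : Type*} [Fintype n] [DecidableEq n] [Field K]
    {S : Set (Matrix n n K)} (a b : GL n K) (hS : ∀ M ∈ S, (a : Matrix n n K) * M * b ∈ S)
    {p : MvPolynomial (n × n) K} (hp : ∀ M ∈ S, eval (fun ij => M ij.1 ij.2) p = 0)
    {M : Matrix n n K} (hM : (a : Matrix n n K) * M * b ∈ S) :
    eval (fun ij => M ij.1 ij.2) p = 0 := by
  let W : Submodule K (MvPolynomial (n × n) K) :=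
    restrictTotalDegree (n × n) K p.totalDegree ⊓
      (vanishingIdeal K ((fun M ij => M ij.1 ij.2) '' S)).restrictScalars K
  have mem_W (q : MvPolynomial (n × n) K) : q ∈ W ↔
      q.totalDegree ≤ p.totalDegree ∧ ∀ M ∈ S, eval (fun ij => M ij.1 ij.2) q = 0 := by
    simp [W, mem_restrictTotalDegree]
  have : FiniteDimensional K W := Submodule.finiteDimensional_of_le inf_le_left
  let e := (matrixTranslateEquiv a b).toLinearEquiv
  have map_le : W.map e.toLinearMap ≤ W := by
    rintro _ ⟨q, hq, rfl⟩
    rw [SetLike.mem_coe, mem_W] at hq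
    refine (mem_W _).2 ⟨(totalDegree_matrixTranslate_le _ _ q).trans hq.1, fun M hM => ?_⟩
    exact (eval_matrixTranslate _ _ M q).trans (hq.2 _ (hS M hM))
  have hq : e.symm p ∈ W := by
    rw [← Submodule.mem_map_equiv, Submodule.map_equiv_eq_self_of_map_le e map_le, mem_W]
    exact ⟨le_rfl, hp⟩
  rw [← e.apply_symm_apply p]
  exact (eval_matrixTranslate _ _ M _).trans (((mem_W _).1 hq).2 _ hM)

end MvPolynomial

/-- Let `𝕂` be a field and `w, g, h ∈ GL(d, 𝕂)`.  For any
`N ∈ ℕ`, the Zariski closure of `{w gⁿ hⁿ : n ≥ N}` contains `w g h`: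
concretely, if a polynomial `p` in the matrix entries vanishes on `w gⁿ hⁿ`
for all `n ≥ N`, then `p (w g h) = 0`. -/
theorem stmt3 {𝕂 : Type*} [Field 𝕂] {d : ℕ}
    (w g h : GL (Fin d) 𝕂) (N : ℕ)
    (p : MvPolynomial (Fin d × Fin d) 𝕂)
    (hp : ∀ n : ℕ, N ≤ n →
      MvPolynomial.eval
        (fun ij => (↑(w * g ^ n * h ^ n) : Matrix (Fin d) (Fin d) 𝕂) ij.1 ij.2) p = 0) :
    MvPolynomial.eval
      (fun ij => (↑(w * g * h) : Matrix (Fin d) (Fin d) 𝕂) ij.1 ij.2) p = 0 := by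
  have shift (n : ℕ) : w * g ^ N * w⁻¹ * (w * g ^ n * h ^ n) * h ^ N =
      w * g ^ (N + n) * h ^ (N + n) := by
    group
  refine MvPolynomial.eval_eq_zero_of_mul_mul_mem (w * g ^ N * w⁻¹) (h ^ N)
    (S := {M | ∃ n ≥ N, ↑(w * g ^ n * h ^ n) = M}) ?_ ?_ ?_
  · rintro _ ⟨n, hn, rfl⟩
    exact ⟨N + n, by omega, by rw [← shift, Units.val_mul, Units.val_mul]⟩
  · rintro _ ⟨n, hn, rfl⟩
    exact hp n hn
  · exact ⟨N + 1, by omega, by rw [← shift, pow_one, pow_one, Units.val_mul, Units.val_mul]⟩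
end

section
/- Let d ≥ 2, 1 ≤ e ≤ d−1, and define F_{d,e}(x) = f(x−e) f(x−e+1) ⋯ f(x−1) where f(x) = x(d−x). Then F_{d,e}(x) = (x−1)^{⌊e} · (d+e−x)^{⌊e}, and the e-th finite difference satisfies Δᵉ F_{d,e}(x) = (−1)ᵉ e! · Σ_{i=0}^{e} (−1)^i C(e,i)² (x−1)^{⌊e−i} (d−x)^{⌊i}. -/
/-- The finite difference operator `Δ g (x) = g (x+1) - g x`. -/
noncomputable def fdiff (g : ℝ → ℝ) : ℝ → ℝ := fun x => g (x + 1) - g x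

/-- The falling factorial `z^{⌊k} = z (z-1) ⋯ (z-k+1)`, with `z^{⌊0} = 1`. -/
noncomputable def ffall (z : ℝ) (k : ℕ) : ℝ := ∏ i ∈ Finset.range k, (z - i)

lemma ffall_succ (z : ℝ) (k : ℕ) : ffall z (k+1) = ffall z k * (z - k) := by
  simp [ffall, Finset.prod_range_succ]

lemma ffall_succ' (z : ℝ) (k : ℕ) : ffall z (k+1) = z * ffall (z - 1) k := by
  rw [ffall, Finset.prod_range_succ']
  simp only [Nat.cast_zero, sub_zero]
  rw [mul_comm]
  congr 1
  apply Finset.prod_congr rfl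
  intro i _
  push_cast; ring

lemma fdiff_ffall (z : ℝ) (k : ℕ) :
    ffall (z + 1) (k+1) - ffall z (k+1) = (k+1) * ffall z k := by
  rw [ffall_succ' (z+1) k, ffall_succ z k]
  simp only [add_sub_cancel_right]
  ring

lemma fdiff_iter_up (n : ℕ) (c : ℝ) : ∀ k ≤ n, ∀ x : ℝ,
    fdiff^[k] (fun y => ffall (y - c) n) x
      = (n.descFactorial k : ℝ) * ffall (x - c) (n - k) := by
  intro k
  induction k with
  | zero => intro _ x; simp
  | succ k ih =>
    intro hk x
    rw [Function.iterate_succ_apply']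
    have hx1 := ih (by omega) (x + 1)
    have hx0 := ih (by omega) x
    simp only [fdiff, hx1, hx0]
    have hm : n - k = (n - (k+1)) + 1 := by omega
    rw [hm] at *
    have key : ffall (x + 1 - c) (n - (k+1) + 1) - ffall (x - c) (n - (k+1) + 1)
        = ((n - (k+1) : ℕ) + 1) * ffall (x - c) (n - (k+1)) := by
      have h := fdiff_ffall (x - c) (n - (k+1))
      rw [show x + 1 - c = (x - c) + 1 by ring]
      exact h
    rw [Nat.descFactorial_succ]
    push_cast [show n - k = (n - (k+1)) + 1 by omega]
    nlinarith [key]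

lemma fdiff_iter_down (n : ℕ) (a : ℝ) : ∀ k ≤ n, ∀ x : ℝ,
    fdiff^[k] (fun y => ffall (a - y) n) x
      = (-1 : ℝ)^k * (n.descFactorial k : ℝ) * ffall (a - k - x) (n - k) := by
  intro k
  induction k with
  | zero => intro _ x; simp
  | succ k ih =>
    intro hk x
    rw [Function.iterate_succ_apply']
    have hx1 := ih (by omega) (x + 1)
    have hx0 := ih (by omega) x
    simp only [fdiff, hx1, hx0]
    have key : ffall (a - k - x) (n - (k+1) + 1) - ffall (a - k - (x+1)) (n - (k+1) + 1)
        = ((n - (k+1) : ℕ) + 1) * ffall (a - k - (x+1)) (n - (k+1)) := by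
      have h := fdiff_ffall (a - k - (x+1)) (n - (k+1))
      rw [show a - k - x = (a - k - (x+1)) + 1 by ring]
      exact h
    rw [Nat.descFactorial_succ]
    rw [show n - k = (n - (k+1)) + 1 by omega] at hx1 hx0 ⊢
    have harg : a - ((k:ℝ)+1) - x = a - k - (x+1) := by ring
    push_cast [show n - k = (n - (k+1)) + 1 from by omega]
    rw [harg, pow_succ]
    linear_combination (-((-1:ℝ)^k * (n.descFactorial k : ℝ))) * key

lemma fdiff_iter_add (n : ℕ) : ∀ (u v : ℝ → ℝ),
    fdiff^[n] (fun y => u y + v y) = fun x => fdiff^[n] u x + fdiff^[n] v x := by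
  induction n with
  | zero => intro u v; rfl
  | succ n ih =>
    intro u v
    rw [Function.iterate_succ_apply, Function.iterate_succ_apply, Function.iterate_succ_apply]
    have h : fdiff (fun y => u y + v y) = fun y => fdiff u y + fdiff v y := by
      funext y; simp [fdiff]; ring
    rw [h, ih (fdiff u) (fdiff v)]

lemma fdiff_iter_shift (n : ℕ) : ∀ (u : ℝ → ℝ),
    fdiff^[n] (fun y => u (y + 1)) = fun x => fdiff^[n] u (x + 1) := by
  induction n with
  | zero => intro u; rfl
  | succ n ih =>
    intro u
    rw [Function.iterate_succ_apply, Function.iterate_succ_apply]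
    have h : fdiff (fun y => u (y + 1)) = fun y => (fdiff u) (y + 1) := by
      funext y; simp [fdiff]
    rw [h, ih (fdiff u)]

lemma fdiff_leibniz (n : ℕ) : ∀ (u v : ℝ → ℝ) (x : ℝ),
    fdiff^[n] (fun y => u y * v y) x =
      ∑ k ∈ Finset.range (n+1),
        (n.choose k : ℝ) * fdiff^[k] u x * fdiff^[n-k] v (x + k) := by
  induction n with
  | zero => intro u v x; simp
  | succ n ih =>
    intro u v x
    have h1 : fdiff (fun y => u y * v y)
        = fun y => u y * fdiff v y + fdiff u y * v (y + 1) := by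
      funext y; simp only [fdiff]; ring
    rw [Function.iterate_succ_apply, h1, fdiff_iter_add n]
    beta_reduce
    rw [ih u (fdiff v) x, ih (fdiff u) (fun y => v (y+1)) x]
    have h2 : ∀ k ∈ Finset.range (n+1),
        (n.choose k : ℝ) * fdiff^[k] (fdiff u) x * fdiff^[n-k] (fun y => v (y+1)) (x + k)
          = (n.choose k : ℝ) * fdiff^[k+1] u x * fdiff^[n-k] v (x + (k+1)) := by
      intro k hk
      rw [fdiff_iter_shift (n-k) v, ← Function.iterate_succ_apply]
      simp only [Nat.succ_eq_add_one]
      ring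
    rw [Finset.sum_congr rfl h2]
    have h3 : ∀ k ∈ Finset.range (n+1),
        (n.choose k : ℝ) * fdiff^[k] u x * fdiff^[n-k] (fdiff v) (x + k)
          = (n.choose k : ℝ) * fdiff^[k] u x * fdiff^[n+1-k] v (x + k) := by
      intro k hk
      simp only [Finset.mem_range] at hk
      rw [← Function.iterate_succ_apply]
      simp only [Nat.succ_eq_add_one]
      rw [show n - k + 1 = n + 1 - k by omega]
    rw [Finset.sum_congr rfl h3]
    set T : ℕ → ℝ := fun k => fdiff^[k] u x * fdiff^[n+1-k] v (x + k) with hT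
    have lhs1 : ∑ k ∈ Finset.range (n+1), (n.choose k : ℝ) * fdiff^[k] u x * fdiff^[n+1-k] v (x + k)
        = ∑ k ∈ Finset.range (n+1), (n.choose k : ℝ) * T k := by
      apply Finset.sum_congr rfl; intro k _; rw [hT]; ring
    have lhs2 : ∑ k ∈ Finset.range (n+1), (n.choose k : ℝ) * fdiff^[k+1] u x * fdiff^[n-k] v (x + (k+1))
        = ∑ k ∈ Finset.range (n+1), (n.choose k : ℝ) * T (k+1) := by
      apply Finset.sum_congr rfl; intro k hk
      simp only [Finset.mem_range] at hk
      rw [hT]; simp only [show n + 1 - (k+1) = n - k by omega]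
      push_cast; ring
    have rhs : ∑ k ∈ Finset.range (n+1+1), ((n+1).choose k : ℝ) * fdiff^[k] u x * fdiff^[n+1-k] v (x + k)
        = ∑ k ∈ Finset.range (n+2), ((n+1).choose k : ℝ) * T k := by
      apply Finset.sum_congr rfl; intro k _; rw [hT]; ring
    rw [lhs1, lhs2, rhs]
    rw [Finset.sum_range_succ' (fun k => ((n+1).choose k : ℝ) * T k) (n+1)]
    have pas : ∀ k, ((n+1).choose (k+1) : ℝ) = (n.choose k : ℝ) + (n.choose (k+1) : ℝ) := by
      intro k; rw [Nat.choose_succ_succ]; push_cast; ring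
    have split : ∑ k ∈ Finset.range (n+1), ((n+1).choose (k+1) : ℝ) * T (k+1)
        = ∑ k ∈ Finset.range (n+1), (n.choose k : ℝ) * T (k+1)
          + ∑ k ∈ Finset.range (n+1), (n.choose (k+1) : ℝ) * T (k+1) := by
      rw [← Finset.sum_add_distrib]
      apply Finset.sum_congr rfl; intro k _; rw [pas]; ring
    rw [split]
    have first : ∑ k ∈ Finset.range (n+1), (n.choose k : ℝ) * T k
        = ∑ k ∈ Finset.range (n+1), (n.choose (k+1) : ℝ) * T (k+1) + T 0 := by
      rw [Finset.sum_range_succ' (fun k => (n.choose k : ℝ) * T k) n,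
          Finset.sum_range_succ (fun k => (n.choose (k+1) : ℝ) * T (k+1)) n]
      simp [Nat.choose_succ_self]
    rw [first]
    simp only [Nat.choose_zero_right, Nat.cast_one]
    ring

lemma combi (e k : ℕ) (hk : k ≤ e) :
    e.choose k * e.descFactorial k * e.descFactorial (e - k)
      = e.factorial * (e.choose k)^2 := by
  rw [Nat.descFactorial_eq_factorial_mul_choose, Nat.descFactorial_eq_factorial_mul_choose,
      Nat.choose_symm hk]
  have h : k.factorial * (e - k).factorial * e.choose k = e.factorial :=
    Nat.choose_mul_factorial_mul_factorial hk ▸ by ring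
  calc e.choose k * (k.factorial * e.choose k) * ((e-k).factorial * e.choose k)
      = (k.factorial * (e-k).factorial * e.choose k) * (e.choose k)^2 := by ring
    _ = e.factorial * (e.choose k)^2 := by rw [h]

/-- For `d ≥ 2`, `1 ≤ e ≤ d-1`, `f(x) = x(d-x)` and
`F_{d,e}(x) = f(x-e) f(x-e+1) ⋯ f(x-1)`, one has
`F_{d,e}(x) = (x-1)^{⌊e} (d+e-x)^{⌊e}` and
`Δᵉ F_{d,e}(x) = (-1)ᵉ e! Σ_{i=0}^{e} (-1)^i C(e,i)² (x-1)^{⌊e-i} (d-x)^{⌊i}`. -/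
theorem stmt5 (d e : ℕ) (hd : 2 ≤ d) (he1 : 1 ≤ e) (he2 : e ≤ d - 1)
    (f F : ℝ → ℝ)
    (hf : ∀ x, f x = x * ((d : ℝ) - x))
    (hF : ∀ x, F x = ∏ i ∈ Finset.range e, f (x - e + i)) :
    (∀ x : ℝ, F x = ffall (x - 1) e * ffall ((d : ℝ) + e - x) e) ∧
    (∀ x : ℝ, fdiff^[e] F x =
      (-1 : ℝ) ^ e * (e.factorial : ℝ) *
        ∑ i ∈ Finset.range (e + 1),
          (-1 : ℝ) ^ i * (e.choose i : ℝ) ^ 2 * ffall (x - 1) (e - i) *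
            ffall ((d : ℝ) - x) i) := by
  have part1 : ∀ x : ℝ, F x = ffall (x - 1) e * ffall ((d : ℝ) + e - x) e := by
    intro x
    rw [hF]
    have h : ∀ i ∈ Finset.range e, f (x - e + i)
        = (x - e + i) * (((d:ℝ) + e - x) - i) := by
      intro i _; rw [hf]; ring
    rw [Finset.prod_congr rfl h, Finset.prod_mul_distrib]
    congr 1
    rw [ffall, ← Finset.prod_range_reflect (fun j => x - 1 - (j:ℝ)) e]
    apply Finset.prod_congr rfl
    intro i hi
    simp only [Finset.mem_range] at hi
    rw [Nat.cast_sub (by omega), Nat.cast_sub (by omega)]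
    push_cast; ring
  refine ⟨part1, ?_⟩
  intro x
  have hFeq : F = fun y => ffall (y - 1) e * ffall ((d : ℝ) + e - y) e :=
    funext part1
  have L := fdiff_leibniz e (fun z => ffall (z - 1) e)
    (fun z => ffall ((d : ℝ) + e - z) e) x
  beta_reduce at L
  rw [hFeq, L, Finset.mul_sum]
  apply Finset.sum_congr rfl
  intro k hk
  simp only [Finset.mem_range] at hk
  have hk' : k ≤ e := by omega
  rw [fdiff_iter_up e 1 k hk' x,
      fdiff_iter_down e ((d:ℝ) + (e:ℝ)) (e-k) (Nat.sub_le e k) (x + k)]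
  rw [show (d:ℝ) + (e:ℝ) - ((e-k : ℕ) : ℝ) - (x + k) = (d:ℝ) - x by
    rw [Nat.cast_sub hk']; ring]
  rw [show e - (e - k) = k by omega]
  have hc : (e.choose k : ℝ) * (e.descFactorial k : ℝ) * (e.descFactorial (e-k) : ℝ)
      = (e.factorial : ℝ) * (e.choose k : ℝ)^2 := by
    exact_mod_cast combi e k hk'
  have hs2 : (-1:ℝ)^e * (-1)^k = (-1)^(e-k) := by
    calc (-1:ℝ)^e * (-1)^k = (-1)^(e-k+k) * (-1)^k := by rw [show e - k + k = e by omega]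
      _ = (-1)^(e-k) * ((-1)^k * (-1)^k) := by rw [pow_add]; ring
      _ = (-1)^(e-k) := by rw [← pow_add, Even.neg_one_pow ⟨k, rfl⟩, mul_one]
  rw [← hs2]
  linear_combination ((-1:ℝ)^e * (-1:ℝ)^k * ffall (x-1) (e-k) * ffall ((d:ℝ)-x) k) * hc
end

section
/- For d ≥ 2 and 1 ≤ j ≤ d, one has Δ^{d−1} F_{d,d−1}(j) = f(1)f(2)⋯f(d−1) · (−1)^{j−1} C(d−1, d−j), where F_{d,d−1}(x) = f(x−d+1)⋯f(x−1) and f(x) = x(d−x). -/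
open Finset

theorem fdiff_eq_fwdDiff : fdiff = fwdDiff (1 : ℝ) := rfl

theorem fwdDiff_iter_eq_of_eq_zero_of_ne {M G : Type*} [AddCommMonoid M] [AddCommGroup G]
    (h : M) (g : M → G) (x : M) {n m : ℕ} (hm : m ≤ n)
    (hg : ∀ k ≤ n, k ≠ m → g (x + k • h) = 0) :
    (fwdDiff h)^[n] g x = ((-1 : ℤ) ^ (n - m) * n.choose m) • g (x + m • h) := by
  rw [fwdDiff_iter_eq_sum_shift, sum_eq_single_of_mem m (mem_range.2 (by omega))]
  intro k hk hkm
  rw [hg k (Nat.lt_succ_iff.1 (mem_range.1 hk)) hkm, smul_zero]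

theorem prod_range_shift_eq_zero {f : ℝ → ℝ} {r : ℝ} (hr : f r = 0) {n k : ℕ}
    (hk : k < n) :
    ∏ i ∈ range n, f (r - k + i) = 0 :=
  prod_eq_zero (mem_range.2 hk) (by rwa [sub_add_cancel])

theorem prod_range_natCast_sub_eq_zero {f : ℝ → ℝ} {n m : ℕ} (h0 : f 0 = 0)
    (hn : f (n + 1) = 0) (hm1 : 1 ≤ m) (hm2 : m ≤ 2 * n + 1) (hmn : m ≠ n + 1) :
    ∏ i ∈ range n, f (m - n + i) = 0 := by
  rcases lt_or_gt_of_ne hmn with hlt | hgt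
  · convert prod_range_shift_eq_zero h0 (n := n) (k := n - m) (by omega) using 4
    push_cast [Nat.cast_sub (by omega : m ≤ n)]
    ring
  · convert prod_range_shift_eq_zero hn (n := n) (k := 2 * n + 1 - m) (by omega) using 4
    push_cast [Nat.cast_sub hm2]
    ring

theorem prod_range_natCast_add_one {f : ℝ → ℝ} (n : ℕ) :
    ∏ i ∈ range n, f (i + 1) = ∏ i ∈ Icc 1 n, f i := by
  rw [← Ico_add_one_right_eq_Icc, prod_Ico_eq_prod_range]
  simp [add_comm]

theorem stmt8_general (d j : ℕ) (hj1 : 1 ≤ j) (hj2 : j ≤ d)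
    (f F : ℝ → ℝ)
    (hf : ∀ x, f x = x * ((d : ℝ) - x))
    (hF : ∀ x, F x = ∏ i ∈ Finset.range (d - 1), f (x - (d - 1 : ℕ) + i)) :
    fdiff^[d - 1] F (j : ℝ) =
      (∏ i ∈ Finset.Icc 1 (d - 1), f (i : ℝ)) *
        (-1 : ℝ) ^ (j - 1) * ((d - 1).choose (d - j) : ℝ) := by
  obtain ⟨n, rfl⟩ : ∃ n, d = n + 1 := ⟨d - 1, by omega⟩
  simp only [Nat.add_sub_cancel] at hF ⊢
  have h0 : f 0 = 0 := by rw [hf, zero_mul]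
  have hroot : f (n + 1) = 0 := by rw [hf]; push_cast; ring
  have hFd : F (n + 1) = ∏ i ∈ Icc 1 n, f i := by
    rw [hF, ← prod_range_natCast_add_one]
    exact prod_congr rfl fun i _ ↦ by ring_nf
  have hjd : (j : ℝ) + (n + 1 - j) • (1 : ℝ) = n + 1 := by
    rw [nsmul_eq_mul, mul_one, ← Nat.cast_add_one, ← Nat.cast_add, Nat.add_sub_cancel' hj2]
  have hF_zero : ∀ k ≤ n, k ≠ n + 1 - j → F (j + k • (1 : ℝ)) = 0 := fun k hk hkj ↦ by
    rw [nsmul_eq_mul, mul_one, ← Nat.cast_add, hF]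
    exact prod_range_natCast_sub_eq_zero h0 hroot (by omega) (by omega) (by omega)
  rw [fdiff_eq_fwdDiff,
    fwdDiff_iter_eq_of_eq_zero_of_ne 1 F j (by omega : n + 1 - j ≤ n) hF_zero, hjd, hFd,
    show n - (n + 1 - j) = j - 1 by omega, zsmul_eq_mul]
  push_cast
  ring

/-- For `d ≥ 2` and `1 ≤ j ≤ d`, with `f(x) = x(d-x)` and
`F_{d,d-1}(x) = f(x-(d-1)) ⋯ f(x-1)`, one has
`Δ^{d-1} F_{d,d-1}(j) = f(1) f(2) ⋯ f(d-1) · (-1)^{j-1} C(d-1, d-j)`. -/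
theorem stmt8 (d j : ℕ) (hd : 2 ≤ d) (hj1 : 1 ≤ j) (hj2 : j ≤ d)
    (f F : ℝ → ℝ)
    (hf : ∀ x, f x = x * ((d : ℝ) - x))
    (hF : ∀ x, F x = ∏ i ∈ Finset.range (d - 1), f (x - (d - 1 : ℕ) + i)) :
    fdiff^[d - 1] F (j : ℝ) =
      (∏ i ∈ Finset.Icc 1 (d - 1), f (i : ℝ)) *
        (-1 : ℝ) ^ (j - 1) * ((d - 1).choose (d - j) : ℝ) :=
  stmt8_general d j hj1 hj2 f F hf hF
end

section
/- Let q₃(d,j) = −d² + 5dj − 5j² and A = [[4, −5], [1, −1]] acting on ℤ². Then q₃ ∘ A = q₃ (A preserves the quadratic form q₃), and consequently, for every k ≥ 0, the pair (d,j) = Aᵏ(7,2) satisfies q₃(d,j) = 1. In particular all these pairs give σ_j(κ³) = 0 in sl(d,ℝ). -/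
/-- Let `q₃(d,j) = -d² + 5dj - 5j²` and `A = [[4,-5], [1,-1]]`
acting on `ℤ²`.  Then `A` preserves the quadratic form `q₃`, and for every
`k ≥ 0` the pair `(d,j) = Aᵏ (7,2)` satisfies `q₃(d,j) = 1`; in particular all
these pairs give `σ_j(κ³) = 0` in `sl(d,ℝ)`, i.e.
`Σ_{t=1}^{3} (-1)^t C(3,t) C(3,t-1) (j-1)^{⌊3-t} (d-1-j)^{⌊t-1} = 0`. -/
theorem stmt14 (q : ℤ → ℤ → ℤ) (hq : ∀ d j, q d j = -d ^ 2 + 5 * d * j - 5 * j ^ 2)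
    (A : Matrix (Fin 2) (Fin 2) ℤ) (hA : A = !![4, -5; 1, -1]) :
    (∀ v : Fin 2 → ℤ, q (A.mulVec v 0) (A.mulVec v 1) = q (v 0) (v 1)) ∧
    (∀ (k : ℕ) (dd jj : ℤ), (A ^ k).mulVec ![7, 2] = ![dd, jj] →
      q dd jj = 1 ∧
      ∑ t ∈ Finset.Icc 1 3,
        (-1 : ℝ) ^ t * (Nat.choose 3 t : ℝ) * (Nat.choose 3 (t - 1) : ℝ) *
          ffall ((jj : ℝ) - 1) (3 - t) * ffall ((dd : ℝ) - 1 - (jj : ℝ)) (t - 1) = 0) := by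
  have inv : ∀ v : Fin 2 → ℤ, q (A.mulVec v 0) (A.mulVec v 1) = q (v 0) (v 1) := by
    intro v
    subst hA
    simp [Matrix.mulVec, dotProduct, Fin.sum_univ_two, hq]
    ring
  refine ⟨inv, ?_⟩
  have key : ∀ k : ℕ, q ((A ^ k).mulVec ![7, 2] 0) ((A ^ k).mulVec ![7, 2] 1) = 1 := by
    intro k
    induction k with
    | zero => simp [hq]
    | succ n ih =>
        rw [pow_succ', ← Matrix.mulVec_mulVec, inv]
        exact ih
  intro k dd jj hk
  have h1 : q dd jj = 1 := by
    have := key k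
    rw [hk] at this
    simpa using this
  refine ⟨h1, ?_⟩
  have h2 : -(dd : ℤ) ^ 2 + 5 * dd * jj - 5 * jj ^ 2 = 1 := by rw [← hq]; exact h1
  have h3 : -(dd : ℝ) ^ 2 + 5 * dd * jj - 5 * jj ^ 2 = 1 := by exact_mod_cast h2
  have : (Finset.Icc 1 3 : Finset ℕ) = {1, 2, 3} := by decide
  rw [this]
  simp [ffall, Finset.prod_range_succ]
  nlinarith [h3]
end

section
/- With E, F as in the principal sl₂-triple of sl(d,ℝ) and 2 ≤ k ≤ d−3, the coefficient of the elementary matrix π^{1, k+3} in the double bracket [[F, E³], Eᵏ] equals −f(3) + f(k+3) − f(k) = −6k when k ≤ d−4, and equals −2f(3) = −6(d−3) when k = d−3; in particular [[F, E³], Eᵏ] ≠ 0 for all 2 ≤ k ≤ d−3. -/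
/-- The nilpotent element `E = Σ_{j=1}^{d-1} π^{j,j+1}` of the principal
`sl₂`-triple of `sl(d,ℝ)`. -/
noncomputable def pE (d : ℕ) : Matrix (Fin d) (Fin d) ℝ :=
  Matrix.of fun i j => if (i : ℕ) + 1 = (j : ℕ) then 1 else 0

/-- The element `F = Σ_{i=1}^{d-1} f(i) π^{i+1,i}` with `f(x) = x(d-x)` of the
principal `sl₂`-triple of `sl(d,ℝ)`. -/
noncomputable def pF (d : ℕ) : Matrix (Fin d) (Fin d) ℝ :=
  Matrix.of fun i j => if (j : ℕ) + 1 = (i : ℕ) then (i.val : ℝ) * ((d : ℝ) - (i.val : ℝ)) else 0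

lemma pE_pow_entry (d n : ℕ) (i j : Fin d) :
    (pE d ^ n) i j = if (i : ℕ) + n = (j : ℕ) then 1 else 0 := by
  induction n generalizing j with
  | zero => simp [Matrix.one_apply, Fin.ext_iff, eq_comm]
  | succ n ih =>
    rw [pow_succ, Matrix.mul_apply]
    by_cases h : (i : ℕ) + (n + 1) = (j : ℕ)
    · rw [if_pos h, Finset.sum_eq_single (⟨(i : ℕ) + n, by omega⟩ : Fin d)]
      · rw [ih, if_pos rfl]
        simp only [pE, Matrix.of_apply]
        rw [if_pos (show (i:ℕ) + n + 1 = (j:ℕ) by omega), one_mul]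
      · intro b _ hb
        have hb' : (b : ℕ) ≠ (i : ℕ) + n := by
          intro hc; exact hb (by simp [Fin.ext_iff, hc])
        rw [ih, if_neg (by omega), zero_mul]
      · intro h; exact absurd (Finset.mem_univ _) h
    · rw [if_neg h]
      apply Finset.sum_eq_zero
      intro b _
      rw [ih]
      simp only [pE, Matrix.of_apply]
      rcases eq_or_ne ((i:ℕ) + n) (b:ℕ) with h2 | h2
      · rw [if_neg (show ¬ ((b:ℕ) + 1 = (j:ℕ)) by omega), mul_zero]
      · rw [if_neg h2, zero_mul]

lemma mul_pE_pow_entry (d n : ℕ) (A : Matrix (Fin d) (Fin d) ℝ) (i j : Fin d) :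
    (A * pE d ^ n) i j = if h : n ≤ (j : ℕ) then A i ⟨(j : ℕ) - n, by omega⟩ else 0 := by
  rw [Matrix.mul_apply]
  split_ifs with h
  · rw [Finset.sum_eq_single (⟨(j : ℕ) - n, by omega⟩ : Fin d)]
    · rw [pE_pow_entry, if_pos (by simp only [Fin.val_mk]; omega), mul_one]
    · intro b _ hb
      have hb' : (b : ℕ) ≠ (j : ℕ) - n := by
        intro hc; exact hb (by simp [Fin.ext_iff, hc])
      rw [pE_pow_entry, if_neg (by omega), mul_zero]
    · intro h; exact absurd (Finset.mem_univ _) h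
  · apply Finset.sum_eq_zero
    intro b _
    rw [pE_pow_entry, if_neg (by omega), mul_zero]

lemma pE_pow_mul_entry (d n : ℕ) (A : Matrix (Fin d) (Fin d) ℝ) (i j : Fin d) :
    (pE d ^ n * A) i j = if h : (i : ℕ) + n < d then A ⟨(i : ℕ) + n, h⟩ j else 0 := by
  rw [Matrix.mul_apply]
  split_ifs with h
  · rw [Finset.sum_eq_single (⟨(i : ℕ) + n, h⟩ : Fin d)]
    · rw [pE_pow_entry, if_pos rfl, one_mul]
    · intro b _ hb
      have hb' : (b : ℕ) ≠ (i : ℕ) + n := by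
        intro hc; exact hb (by simp [Fin.ext_iff, hc])
      rw [pE_pow_entry, if_neg (by omega), zero_mul]
    · intro h; exact absurd (Finset.mem_univ _) h
  · apply Finset.sum_eq_zero
    intro b _
    rw [pE_pow_entry, if_neg (by omega), zero_mul]

/-- For `2 ≤ k ≤ d-3`, the coefficient of the elementary
matrix `π^{1,k+3}` (0-based: the `(0, k+2)` entry) in `X = [[F,E³],Eᵏ]` equals
`-6k` when `k ≤ d-4` and `-6(d-3)` when `k = d-3`; in particular
`[[F,E³],Eᵏ] ≠ 0`. -/
theorem stmt17 (d k : ℕ) (hd : 5 ≤ d) (hk1 : 2 ≤ k) (hk2 : k ≤ d - 3)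
    (X : Matrix (Fin d) (Fin d) ℝ)
    (hX : X = (pF d * pE d ^ 3 - pE d ^ 3 * pF d) * pE d ^ k
        - pE d ^ k * (pF d * pE d ^ 3 - pE d ^ 3 * pF d)) :
    (k ≤ d - 4 → X ⟨0, by omega⟩ ⟨k + 2, by omega⟩ = -6 * (k : ℝ)) ∧
    (k = d - 3 → X ⟨0, by omega⟩ ⟨k + 2, by omega⟩ = -6 * ((d : ℝ) - 3)) ∧
    X ≠ 0 := by
  set B := pF d * pE d ^ 3 - pE d ^ 3 * pF d with hB
  have hB02 : B ⟨0, by omega⟩ ⟨2, by omega⟩ = -(3 * ((d : ℝ) - 3)) := by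
    rw [hB, Matrix.sub_apply, mul_pE_pow_entry, pE_pow_mul_entry,
      dif_neg (show ¬ (3 ≤ ((⟨2, by omega⟩ : Fin d) : ℕ)) by simp),
      dif_pos (show ((⟨0, by omega⟩ : Fin d) : ℕ) + 3 < d by simpa using by omega)]
    simp only [pF, Matrix.of_apply]
    norm_num
  have hBk : ∀ (hik : k < d) (hjk : k + 2 < d), B ⟨k, hik⟩ ⟨k + 2, hjk⟩ =
      (k : ℝ) * ((d : ℝ) - k) -
        (if k + 3 < d then ((k : ℝ) + 3) * ((d : ℝ) - ((k : ℝ) + 3)) else 0) := by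
    intro hik hjk
    rw [hB, Matrix.sub_apply, mul_pE_pow_entry, pE_pow_mul_entry,
      dif_pos (show 3 ≤ ((⟨k + 2, hjk⟩ : Fin d) : ℕ) by simp only [Fin.val_mk]; omega)]
    simp only [pF, Matrix.of_apply, Fin.val_mk]
    rw [if_pos (show k + 2 - 3 + 1 = k by omega)]
    by_cases h4 : k + 3 < d
    · rw [dif_pos (show k + 3 < d from h4), if_pos h4]
      norm_num
    · rw [dif_neg (show ¬ (k + 3 < d) from h4), if_neg h4]
  have hXe : ∀ (hi : (0:ℕ) < d) (hj : k + 2 < d), X ⟨0, hi⟩ ⟨k + 2, hj⟩ =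
      B ⟨0, hi⟩ ⟨2, by omega⟩ - B ⟨k, by omega⟩ ⟨k + 2, hj⟩ := by
    intro hi hj
    rw [hX, Matrix.sub_apply, mul_pE_pow_entry, pE_pow_mul_entry,
      dif_pos (show k ≤ ((⟨k + 2, hj⟩ : Fin d) : ℕ) by simp only [Fin.val_mk]; omega),
      dif_pos (show ((⟨0, hi⟩ : Fin d) : ℕ) + k < d by simp only [Fin.val_mk]; omega)]
    congr 2 <;> simp only [Fin.mk.injEq, Fin.val_mk] <;> omega
  have key : X ⟨0, by omega⟩ ⟨k + 2, by omega⟩ =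
      if k + 3 < d then -6 * (k : ℝ) else -6 * ((d : ℝ) - 3) := by
    rw [hXe, hB02, hBk]
    by_cases h4 : k + 3 < d
    · rw [if_pos h4, if_pos h4]; ring
    · rw [if_neg h4, if_neg h4]
      have hk3 : k + 3 = d := by omega
      have : (k : ℝ) = (d : ℝ) - 3 := by
        have := congrArg (Nat.cast : ℕ → ℝ) hk3
        push_cast at this; linarith
      rw [this]; ring
  refine ⟨fun h => ?_, fun h => ?_, fun h0 => ?_⟩
  · rw [key, if_pos (by omega)]
  · rw [key, if_neg (by omega)]
  · rw [h0] at key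
    simp only [Matrix.zero_apply] at key
    by_cases h4 : k + 3 < d
    · rw [if_pos h4] at key
      have : (k : ℝ) = 0 := by linarith
      have : k = 0 := by exact_mod_cast this
      omega
    · rw [if_neg h4] at key
      have : (d : ℝ) = 3 := by linarith
      have : d = 3 := by exact_mod_cast this
      omega
end
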